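/- arXiv:2505.11595 — 8 statements merged into one kernel-verified Lean document; each statement's English description precedes it below -/
import Mathlib

section
/- The function f11(p) = log p + p(1-p) - log(1 - p + p·exp(p(1-p))) is strictly increasing on the open interval (0,1). -/
/-!
Writing `p e^{p(1-p)} / (1 - p + p e^{p(1-p)}) = 1 / (1 + exp (g p))` with
`g p = log (1 - p) - log p - p (1 - p)`, we get `f11 = -log (1 + exp ∘ g)` on `(0, 1)`.
Since `x ↦ -log (1 + exp x)` is strictly decreasing, it suffices that `g` is strictly decreasing,
and indeed `g' p = -1/(1 - p) - 1/p + 2p - 1 < -1 - 1 + 1 < 0`.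
-/

noncomputable def f11 (p : ℝ) : ℝ :=
  Real.log p + p * (1 - p) - Real.log (1 - p + p * Real.exp (p * (1 - p)))

open Real Set

noncomputable def f11Exponent (p : ℝ) : ℝ :=
  log (1 - p) - log p - p * (1 - p)

lemma hasDerivAt_f11Exponent {p : ℝ} (hp : p ∈ Ioo (0 : ℝ) 1) :
    HasDerivAt f11Exponent (-(1 - p)⁻¹ - p⁻¹ + (2 * p - 1)) p := by
  have hlog_one_sub : HasDerivAt (fun q => log (1 - q)) (-(1 - p)⁻¹) p :=
    (((hasDerivAt_id p).const_sub 1).log (sub_pos.2 hp.2).ne').congr_deriv (by simp [neg_div])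
  have hquad : HasDerivAt (fun q : ℝ => q * (1 - q)) (1 - 2 * p) p :=
    ((hasDerivAt_id p).mul ((hasDerivAt_id p).const_sub 1)).congr_deriv (by simp only [id]; ring)
  exact ((hlog_one_sub.sub (hasDerivAt_log hp.1.ne')).sub hquad).congr_deriv (by ring)

lemma f11Exponent_strictAntiOn : StrictAntiOn f11Exponent (Ioo (0 : ℝ) 1) := by
  refine strictAntiOn_of_deriv_neg (convex_Ioo 0 1)
    (fun p hp => (hasDerivAt_f11Exponent hp).continuousAt.continuousWithinAt) ?_
  intro p hp
  rw [interior_Ioo] at hp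
  obtain ⟨h0, h1⟩ := hp
  rw [(hasDerivAt_f11Exponent ⟨h0, h1⟩).deriv]
  have h_one_lt_inv_one_sub : 1 < (1 - p)⁻¹ := (one_lt_inv₀ (by linarith)).2 (by linarith)
  have h_one_lt_inv : 1 < p⁻¹ := (one_lt_inv₀ h0).2 h1
  linarith

lemma f11_eq_neg_log_one_add_exp {p : ℝ} (hp : p ∈ Ioo (0 : ℝ) 1) :
    f11 p = -log (1 + exp (f11Exponent p)) := by
  obtain ⟨h0, h1⟩ := hp
  have h1p : 0 < 1 - p := sub_pos.2 h1
  set E := exp (p * (1 - p)) with hE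
  have hE0 : 0 < E := exp_pos _
  have hpE : 0 < p * E := by positivity
  have hsum : 1 + exp (f11Exponent p) = (1 - p + p * E) / (p * E) := by
    rw [f11Exponent, exp_sub, exp_sub, exp_log h1p, exp_log h0, ← hE]
    field_simp
    ring
  rw [hsum, log_div (by positivity) hpE.ne', log_mul h0.ne' hE0.ne', hE, log_exp, f11]
  ring

lemma StrictAntiOn.neg_log_one_add_exp {s : Set ℝ} {g : ℝ → ℝ} (hg : StrictAntiOn g s) :
    StrictMonoOn (fun x => -log (1 + exp (g x))) s := fun x hx y hy hxy =>
  neg_lt_neg <| log_lt_log (by positivity) <| add_lt_add_right (exp_lt_exp.2 (hg hx hy hxy)) 1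

theorem f11_strictMonoOn : StrictMonoOn f11 (Set.Ioo (0 : ℝ) 1) := by
  intro x hx y hy hxy
  rw [f11_eq_neg_log_one_add_exp hx, f11_eq_neg_log_one_add_exp hy]
  exact f11Exponent_strictAntiOn.neg_log_one_add_exp hx hy hxy
end

section
/- The function f21(p,q) = log p + p(1-p)q - log(1 - p + p·exp(p(1-p)q)) is strictly increasing in p ∈ (0,1) for every fixed q ∈ (0,1), and strictly increasing in q ∈ (0,1) for every fixed p ∈ (0,1). -/
/-!
With `σ` the logistic sigmoid, `f21 p q = log σ(log p - log (1 - p) + p(1-p)q)` for `p ∈ (0,1)`,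
and `log ∘ σ` is strictly increasing. The argument of `σ` is affine in `q` with slope
`p(1-p) > 0`; its `p`-derivative `1/(p(1-p)) + (1-2p)q` is positive because
`1/(p(1-p)) ≥ 4 > |(1-2p)q|` whenever `|q| ≤ 4`.
-/

noncomputable def f21 (p q : ℝ) : ℝ :=
  Real.log p + p * (1 - p) * q - Real.log (1 - p + p * Real.exp (p * (1 - p) * q))

open Real Set

lemma sigmoid_eq_exp_div (x : ℝ) : sigmoid x = exp x / (1 + exp x) := by
  rw [sigmoid_def, exp_neg]
  field_simp
  ring

lemma strictMono_log_sigmoid : StrictMono fun x => log (sigmoid x) :=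
  fun _ _ h => log_lt_log (sigmoid_pos _) (sigmoid_lt h)

lemma f21_eq_log_sigmoid {p : ℝ} (hp₀ : 0 < p) (hp₁ : p < 1) (q : ℝ) :
    f21 p q = log (sigmoid (log p - log (1 - p) + p * (1 - p) * q)) := by
  set x := p * (1 - p) * q
  have h1p : 0 < 1 - p := by linarith
  have hsig : sigmoid (log p - log (1 - p) + x) = p * exp x / (1 - p + p * exp x) := by
    rw [sigmoid_eq_exp_div, exp_add, exp_sub, exp_log hp₀, exp_log h1p]
    field_simp
  rw [f21, hsig, log_div (by positivity) (by positivity), log_mul hp₀.ne' (exp_pos x).ne',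
    log_exp]

lemma hasDerivAt_log_sub_log_one_sub_add_mul {p : ℝ} (hp₀ : p ≠ 0) (hp₁ : p ≠ 1) (q : ℝ) :
    HasDerivAt (fun p => log p - log (1 - p) + p * (1 - p) * q)
      (p⁻¹ + (1 - p)⁻¹ + (1 - 2 * p) * q) p := by
  have h1p : 1 - p ≠ 0 := sub_ne_zero.mpr hp₁.symm
  have hlog₁ := ((hasDerivAt_id' p).const_sub 1).log h1p
  have hpoly := ((hasDerivAt_id' p).fun_mul ((hasDerivAt_id' p).const_sub 1)).mul_const q
  refine (((hasDerivAt_log hp₀).fun_sub hlog₁).fun_add hpoly).congr_deriv ?_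
  field_simp
  ring

lemma inv_add_inv_one_sub_add_mul_pos {p q : ℝ} (hp₀ : 0 < p) (hp₁ : p < 1) (hq : |q| ≤ 4) :
    0 < p⁻¹ + (1 - p)⁻¹ + (1 - 2 * p) * q := by
  have hinv : p⁻¹ + (1 - p)⁻¹ = (p * (1 - p))⁻¹ := by
    field_simp [(by linarith : 1 - p ≠ 0)]
    ring
  have hfour : 4 ≤ (p * (1 - p))⁻¹ := by
    rw [le_inv_comm₀ (by norm_num) (by nlinarith)]
    nlinarith [sq_nonneg (2 * p - 1)]
  have hlt : |(1 - 2 * p) * q| < 4 :=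
    calc |(1 - 2 * p) * q| = |1 - 2 * p| * |q| := abs_mul _ _
      _ ≤ |1 - 2 * p| * 4 := by gcongr
      _ < 1 * 4 := by gcongr; exact abs_lt.mpr ⟨by linarith, by linarith⟩
      _ = 4 := one_mul 4
  rw [hinv]
  linarith [neg_abs_le ((1 - 2 * p) * q)]

lemma strictMonoOn_log_sub_log_one_sub_add_mul {q : ℝ} (hq : |q| ≤ 4) :
    StrictMonoOn (fun p => log p - log (1 - p) + p * (1 - p) * q) (Ioo 0 1) := by
  have hderiv : ∀ p ∈ Ioo (0 : ℝ) 1, HasDerivAt (fun p => log p - log (1 - p) + p * (1 - p) * q)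
      (p⁻¹ + (1 - p)⁻¹ + (1 - 2 * p) * q) p :=
    fun p hp => hasDerivAt_log_sub_log_one_sub_add_mul hp.1.ne' hp.2.ne q
  refine strictMonoOn_of_hasDerivWithinAt_pos (convex_Ioo 0 1)
    (f' := fun p => p⁻¹ + (1 - p)⁻¹ + (1 - 2 * p) * q)
    (fun p hp => (hderiv p hp).continuousAt.continuousWithinAt) (fun p hp => ?_) (fun p hp => ?_)
  all_goals rw [interior_Ioo] at hp
  · exact (hderiv p hp).hasDerivWithinAt
  · exact inv_add_inv_one_sub_add_mul_pos hp.1 hp.2 hq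

lemma f21_strictMonoOn_left {q : ℝ} (hq : |q| ≤ 4) :
    StrictMonoOn (fun p => f21 p q) (Ioo 0 1) := by
  intro p₁ hp₁ p₂ hp₂ h
  simp only [f21_eq_log_sigmoid hp₁.1 hp₁.2, f21_eq_log_sigmoid hp₂.1 hp₂.2]
  exact strictMono_log_sigmoid (strictMonoOn_log_sub_log_one_sub_add_mul hq hp₁ hp₂ h)

lemma f21_strictMono_right {p : ℝ} (hp₀ : 0 < p) (hp₁ : p < 1) : StrictMono (f21 p) := by
  intro q₁ q₂ h
  simp only [f21_eq_log_sigmoid hp₀ hp₁]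
  have : 0 < p * (1 - p) := mul_pos hp₀ (by linarith)
  exact strictMono_log_sigmoid (by gcongr)

theorem f21_strictMono_in_each_variable :
    (∀ q ∈ Set.Ioo (0 : ℝ) 1, StrictMonoOn (fun p => f21 p q) (Set.Ioo (0 : ℝ) 1)) ∧
    (∀ p ∈ Set.Ioo (0 : ℝ) 1, StrictMonoOn (fun q => f21 p q) (Set.Ioo (0 : ℝ) 1)) :=
  ⟨fun _ hq => f21_strictMonoOn_left (abs_le.mpr ⟨by linarith [hq.1], by linarith [hq.2]⟩),
    fun _ hp => (f21_strictMono_right hp.1 hp.2).strictMonoOn _⟩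
end

section
/- The function φ(x) = log(1 + exp(-exp(x))) is strictly concave on the interval (-∞, 0). -/
open Real

private lemma one_add_exp_pos (y : ℝ) : (0:ℝ) < 1 + Real.exp y := by positivity

private lemma hasDerivAt_phi (x : ℝ) :
    HasDerivAt (fun x : ℝ => Real.log (1 + Real.exp (-Real.exp x)))
      (Real.exp (-Real.exp x) * (-Real.exp x) / (1 + Real.exp (-Real.exp x))) x := by
  have h1 : HasDerivAt (fun x : ℝ => -Real.exp x) (-Real.exp x) x := (Real.hasDerivAt_exp x).neg
  have h2 : HasDerivAt (fun x : ℝ => Real.exp (-Real.exp x))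
      (Real.exp (-Real.exp x) * (-Real.exp x)) x := (Real.hasDerivAt_exp _).comp x h1
  have h3 : HasDerivAt (fun x : ℝ => 1 + Real.exp (-Real.exp x))
      (Real.exp (-Real.exp x) * (-Real.exp x)) x := h2.const_add 1
  exact h3.log (one_add_exp_pos _).ne'

private lemma deriv_phi :
    deriv (fun x : ℝ => Real.log (1 + Real.exp (-Real.exp x))) =
      fun x => Real.exp (-Real.exp x) * (-Real.exp x) / (1 + Real.exp (-Real.exp x)) := by
  funext x; exact (hasDerivAt_phi x).deriv

private lemma hasDerivAt_phi' (x : ℝ) :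
    HasDerivAt (fun x : ℝ => Real.exp (-Real.exp x) * (-Real.exp x) / (1 + Real.exp (-Real.exp x)))
      (((Real.exp (-Real.exp x) * (-Real.exp x) * (-Real.exp x) +
          Real.exp (-Real.exp x) * (-Real.exp x)) * (1 + Real.exp (-Real.exp x)) -
        (Real.exp (-Real.exp x) * (-Real.exp x)) * (Real.exp (-Real.exp x) * (-Real.exp x))) /
        ((1 + Real.exp (-Real.exp x)) ^ 2)) x := by
  have h1 : HasDerivAt (fun x : ℝ => -Real.exp x) (-Real.exp x) x := (Real.hasDerivAt_exp x).neg
  have h2 : HasDerivAt (fun x : ℝ => Real.exp (-Real.exp x))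
      (Real.exp (-Real.exp x) * (-Real.exp x)) x := (Real.hasDerivAt_exp _).comp x h1
  have h3 : HasDerivAt (fun x : ℝ => 1 + Real.exp (-Real.exp x))
      (Real.exp (-Real.exp x) * (-Real.exp x)) x := h2.const_add 1
  have hn : HasDerivAt (fun x : ℝ => Real.exp (-Real.exp x) * (-Real.exp x))
      (Real.exp (-Real.exp x) * (-Real.exp x) * (-Real.exp x) +
        Real.exp (-Real.exp x) * (-Real.exp x)) x := h2.mul h1
  exact hn.div h3 (one_add_exp_pos _).ne'

theorem phi_strictConcaveOn :
    StrictConcaveOn ℝ (Set.Iio (0 : ℝ))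
      (fun x : ℝ => Real.log (1 + Real.exp (-Real.exp x))) := by
  apply strictConcaveOn_of_deriv2_neg (convex_Iio 0)
  · exact ((continuous_const.add (Real.continuous_exp.comp Real.continuous_exp.neg)).log
      (fun x => (one_add_exp_pos _).ne')).continuousOn
  · intro x hx
    rw [interior_Iio] at hx
    have hx' : Real.exp x < 1 := by
      rw [Real.exp_lt_one_iff]; exact hx
    have := (hasDerivAt_phi' x).deriv
    simp only [Function.iterate_succ, Function.iterate_zero, Function.comp_apply, id_eq]
    rw [deriv_phi, this]
    set a := Real.exp x with ha
    set E := Real.exp (-a) with hE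
    have hE0 : 0 < E := Real.exp_pos _
    have ha0 : 0 < a := Real.exp_pos _
    have hd : 0 < (1 + E) ^ 2 := by positivity
    apply div_neg_of_neg_of_pos _ hd
    nlinarith [mul_pos ha0 hE0, mul_pos (mul_pos ha0 hE0) hE0]
end

section
/- For the SGPO and GRPO dynamics initialized at pS_0 = qS_0 = pG_0 = qG_0 = 1/2, each of the four sequences pS_k, qS_k, pG_k, qG_k is strictly increasing in k, and all four sequences lie in the open interval (1/2, 1) for every k ≥ 1, that is, 1/2 < pS_k < 1, 1/2 < qS_k < 1, 1/2 < pG_k < 1, 1/2 < qG_k < 1 for all k ≥ 1. -/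
noncomputable def f12 (p q : ℝ) : ℝ :=
  Real.log q + p ^ 2 * q * (1 - q) - Real.log (1 - q + q * Real.exp (p ^ 2 * q * (1 - q)))

noncomputable def f22 (p q : ℝ) : ℝ :=
  Real.log q + p * q * (1 - q) - Real.log (1 - q + q * Real.exp (p * q * (1 - q)))

lemma step_lemma (p c : ℝ) (hp0 : 0 < p) (hp1 : p < 1) (hc : 0 < c) :
    p < Real.exp (Real.log p + c - Real.log (1 - p + p * Real.exp c)) ∧
    Real.exp (Real.log p + c - Real.log (1 - p + p * Real.exp c)) < 1 := by
  have hec : (1 : ℝ) < Real.exp c := by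
    calc (1:ℝ) = Real.exp 0 := Real.exp_zero.symm
    _ < Real.exp c := Real.exp_lt_exp.mpr hc
  have hexp : (0:ℝ) < Real.exp c := Real.exp_pos c
  have hD : 0 < 1 - p + p * Real.exp c := by nlinarith
  have heq : Real.exp (Real.log p + c - Real.log (1 - p + p * Real.exp c))
      = p * Real.exp c / (1 - p + p * Real.exp c) := by
    rw [Real.exp_sub, Real.exp_add, Real.exp_log hp0, Real.exp_log hD]
  rw [heq]
  constructor
  · rw [lt_div_iff₀ hD]; nlinarith [mul_pos (mul_pos hp0 (sub_pos.mpr hp1)) (sub_pos.mpr hec)]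
  · rw [div_lt_one hD]; nlinarith

theorem dynamics_strict_increasing_and_bounds (pS qS pG qG : ℕ → ℝ)
    (hpS0 : pS 0 = 1 / 2) (hqS0 : qS 0 = 1 / 2)
    (hpG0 : pG 0 = 1 / 2) (hqG0 : qG 0 = 1 / 2)
    (hpS : ∀ k, pS (k + 1) = Real.exp (f11 (pS k)))
    (hqS : ∀ k, qS (k + 1) = Real.exp (f12 (pS k) (qS k)))
    (hpG : ∀ k, pG (k + 1) = Real.exp (f21 (pG k) (qG k)))
    (hqG : ∀ k, qG (k + 1) = Real.exp (f22 (pG k) (qG k))) :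
    StrictMono pS ∧ StrictMono qS ∧ StrictMono pG ∧ StrictMono qG ∧
    ∀ k : ℕ, 1 ≤ k →
      pS k ∈ Set.Ioo (1 / 2 : ℝ) 1 ∧ qS k ∈ Set.Ioo (1 / 2 : ℝ) 1 ∧
      pG k ∈ Set.Ioo (1 / 2 : ℝ) 1 ∧ qG k ∈ Set.Ioo (1 / 2 : ℝ) 1 := by
  -- invariant: all four values in (0,1), and each step strictly increases
  have key : ∀ k, (0 < pS k ∧ pS k < 1) ∧ (0 < qS k ∧ qS k < 1) ∧
      (0 < pG k ∧ pG k < 1) ∧ (0 < qG k ∧ qG k < 1) ∧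
      pS k < pS (k+1) ∧ qS k < qS (k+1) ∧ pG k < pG (k+1) ∧ qG k < qG (k+1) := by
    have main : ∀ p q : ℝ, 0 < p → p < 1 → 0 < q → q < 1 →
        (p < Real.exp (f11 p) ∧ Real.exp (f11 p) < 1) ∧
        (q < Real.exp (f12 p q) ∧ Real.exp (f12 p q) < 1) ∧
        (p < Real.exp (f21 p q) ∧ Real.exp (f21 p q) < 1) ∧
        (q < Real.exp (f22 p q) ∧ Real.exp (f22 p q) < 1) := by
      intro p q hp0 hp1 hq0 hq1
      refine ⟨step_lemma p _ hp0 hp1 (mul_pos hp0 (sub_pos.mpr hp1)),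
        step_lemma q _ hq0 hq1 (mul_pos (mul_pos (pow_pos hp0 2) hq0) (sub_pos.mpr hq1)),
        step_lemma p _ hp0 hp1 (mul_pos (mul_pos hp0 (sub_pos.mpr hp1)) hq0),
        step_lemma q _ hq0 hq1 (mul_pos (mul_pos hp0 hq0) (sub_pos.mpr hq1))⟩
    intro k
    induction k with
    | zero =>
      have h0 : (0:ℝ) < 1/2 := by norm_num
      have h1 : (1/2:ℝ) < 1 := by norm_num
      have hS := main (pS 0) (qS 0) (hpS0 ▸ h0) (hpS0 ▸ h1) (hqS0 ▸ h0) (hqS0 ▸ h1)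
      have hG := main (pG 0) (qG 0) (hpG0 ▸ h0) (hpG0 ▸ h1) (hqG0 ▸ h0) (hqG0 ▸ h1)
      rw [hpS 0, hqS 0, hpG 0, hqG 0]
      refine ⟨⟨hpS0 ▸ h0, hpS0 ▸ h1⟩, ⟨hqS0 ▸ h0, hqS0 ▸ h1⟩,
        ⟨hpG0 ▸ h0, hpG0 ▸ h1⟩, ⟨hqG0 ▸ h0, hqG0 ▸ h1⟩,
        hS.1.1, hS.2.1.1, hG.2.2.1.1, hG.2.2.2.1⟩
    | succ n ih =>
      obtain ⟨⟨hpS0', hpS1'⟩, ⟨hqS0', hqS1'⟩, ⟨hpG0', hpG1'⟩, ⟨hqG0', hqG1'⟩,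
        hps, hqs, hpg, hqg⟩ := ih
      have hpSn1 : 0 < pS (n+1) ∧ pS (n+1) < 1 := by
        rw [hpS n]; exact ⟨lt_trans hpS0' (hpS n ▸ hps), (main _ _ hpS0' hpS1' hqS0' hqS1').1.2⟩
      have hqSn1 : 0 < qS (n+1) ∧ qS (n+1) < 1 := by
        rw [hqS n]; exact ⟨lt_trans hqS0' (hqS n ▸ hqs), (main _ _ hpS0' hpS1' hqS0' hqS1').2.1.2⟩
      have hpGn1 : 0 < pG (n+1) ∧ pG (n+1) < 1 := by
        rw [hpG n]; exact ⟨lt_trans hpG0' (hpG n ▸ hpg), (main _ _ hpG0' hpG1' hqG0' hqG1').2.2.1.2⟩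
      have hqGn1 : 0 < qG (n+1) ∧ qG (n+1) < 1 := by
        rw [hqG n]; exact ⟨lt_trans hqG0' (hqG n ▸ hqg), (main _ _ hpG0' hpG1' hqG0' hqG1').2.2.2.2⟩
      have hS := main (pS (n+1)) (qS (n+1)) hpSn1.1 hpSn1.2 hqSn1.1 hqSn1.2
      have hG := main (pG (n+1)) (qG (n+1)) hpGn1.1 hpGn1.2 hqGn1.1 hqGn1.2
      refine ⟨hpSn1, hqSn1, hpGn1, hqGn1, ?_, ?_, ?_, ?_⟩
      · rw [hpS (n+1)]; exact hS.1.1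
      · rw [hqS (n+1)]; exact hS.2.1.1
      · rw [hpG (n+1)]; exact hG.2.2.1.1
      · rw [hqG (n+1)]; exact hG.2.2.2.1
  have smS : StrictMono pS := strictMono_nat_of_lt_succ fun n => (key n).2.2.2.2.1
  have smqS : StrictMono qS := strictMono_nat_of_lt_succ fun n => (key n).2.2.2.2.2.1
  have smG : StrictMono pG := strictMono_nat_of_lt_succ fun n => (key n).2.2.2.2.2.2.1
  have smqG : StrictMono qG := strictMono_nat_of_lt_succ fun n => (key n).2.2.2.2.2.2.2
  refine ⟨smS, smqS, smG, smqG, fun k hk => ?_⟩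
  have h1 : ∀ f : ℕ → ℝ, StrictMono f → f 0 = 1/2 → 1/2 < f k :=
    fun f hf h0 => h0 ▸ hf (Nat.lt_of_lt_of_le Nat.zero_lt_one hk)
  exact ⟨⟨h1 pS smS hpS0, (key k).1.2⟩, ⟨h1 qS smqS hqS0, (key k).2.1.2⟩,
    ⟨h1 pG smG hpG0, (key k).2.2.1.2⟩, ⟨h1 qG smqG hqG0, (key k).2.2.2.1.2⟩⟩
end

section
/- For the SGPO dynamics initialized at pS_0 = qS_0 = 1/2, one has pS_k > qS_k for every k ≥ 1. -/
/-!
Both updates are logistic: for `0 < q < 1`, `exp (f12 p q) = σ (logit q + p² q (1 - q))` and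
`exp (f11 p) = σ (logit p + p (1 - p))`, with `σ` the sigmoid. Since `σ` is increasing, the
comparison happens on the logit scale, where `p² < 1` gives
`logit q + p² q (1 - q) < logit q + q (1 - q) ≤ logit p + p (1 - p)` for `q ≤ p`, the last step
because `x ↦ logit x + x (1 - x)` is monotone on `(0, 1)`. By induction `0 < q_k ≤ p_k < 1`.
-/

open Real Set

noncomputable def logit (x : ℝ) : ℝ := log x - log (1 - x)

lemma sigmoid_logit_add {x : ℝ} (hx₀ : 0 < x) (hx₁ : x < 1) (t : ℝ) :
    sigmoid (logit x + t) = x * exp t / (1 - x + x * exp t) := by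
  have h1x : 0 < 1 - x := sub_pos.2 hx₁
  rw [sigmoid_def, logit, neg_add, neg_sub, exp_add, exp_sub, exp_log hx₀, exp_log h1x, exp_neg]
  field_simp
  ring

lemma monotoneOn_logit_add_mul_one_sub :
    MonotoneOn (fun x => logit x + x * (1 - x)) (Ioo 0 1) := by
  rintro a ⟨ha₀, ha₁⟩ b ⟨hb₀, hb₁⟩ hab
  -- `log` alone already grows by at least `b - a`, while `x (1 - x)` drops by at most `b - a`.
  have hlog : b - a ≤ log b - log a := by
    have h := log_le_sub_one_of_pos (div_pos ha₀ hb₀)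
    rw [log_div ha₀.ne' hb₀.ne'] at h
    have : a / b - 1 ≤ a - b := by
      rw [div_sub_one hb₀.ne', div_le_iff₀ hb₀]
      nlinarith
    linarith
  have hlog_one_sub : log (1 - b) ≤ log (1 - a) := log_le_log (by linarith) (by linarith)
  simp only [logit]
  nlinarith [mul_nonneg (sub_nonneg.2 hab) (by linarith : (0 : ℝ) ≤ 2 - a - b)]

lemma exp_f12_eq_sigmoid (p : ℝ) {q : ℝ} (hq₀ : 0 < q) (hq₁ : q < 1) :
    exp (f12 p q) = sigmoid (logit q + p ^ 2 * q * (1 - q)) := by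
  have hden : 0 < 1 - q + q * exp (p ^ 2 * q * (1 - q)) := by
    nlinarith [mul_pos hq₀ (exp_pos (p ^ 2 * q * (1 - q)))]
  rw [sigmoid_logit_add hq₀ hq₁, f12, exp_sub, exp_add, exp_log hq₀, exp_log hden]

lemma exp_f11_eq_sigmoid {p : ℝ} (hp₀ : 0 < p) (hp₁ : p < 1) :
    exp (f11 p) = sigmoid (logit p + p * (1 - p)) := by
  rw [show f11 p = f12 1 p by simp [f11, f12], exp_f12_eq_sigmoid 1 hp₀ hp₁, one_pow, one_mul]

lemma exp_f12_lt_exp_f11 {p q : ℝ} (hq₀ : 0 < q) (hqp : q ≤ p) (hp₁ : p < 1) :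
    exp (f12 p q) < exp (f11 p) := by
  have hp₀ : 0 < p := hq₀.trans_le hqp
  have hq₁ : q < 1 := hqp.trans_lt hp₁
  rw [exp_f12_eq_sigmoid p hq₀ hq₁, exp_f11_eq_sigmoid hp₀ hp₁, sigmoid_lt_iff]
  have hp_sq : p ^ 2 < 1 := by nlinarith
  have hvar : 0 < q * (1 - q) := mul_pos hq₀ (sub_pos.2 hq₁)
  calc logit q + p ^ 2 * q * (1 - q) < logit q + q * (1 - q) := by nlinarith
    _ ≤ logit p + p * (1 - p) :=
      monotoneOn_logit_add_mul_one_sub ⟨hq₀, hq₁⟩ ⟨hp₀, hp₁⟩ hqp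

theorem sgpo_p_gt_q (pS qS : ℕ → ℝ)
    (hpS0 : pS 0 = 1 / 2) (hqS0 : qS 0 = 1 / 2)
    (hpS : ∀ k, pS (k + 1) = Real.exp (f11 (pS k)))
    (hqS : ∀ k, qS (k + 1) = Real.exp (f12 (pS k) (qS k))) :
    ∀ k : ℕ, 1 ≤ k → pS k > qS k := by
  have invariant : ∀ k, 0 < qS k ∧ qS k ≤ pS k ∧ pS k < 1 := by
    intro k
    induction k with
    | zero => norm_num [hpS0, hqS0]
    | succ k ih =>
      obtain ⟨hq₀, hqp, hp₁⟩ := ih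
      rw [hpS, hqS]
      refine ⟨exp_pos _, (exp_f12_lt_exp_f11 hq₀ hqp hp₁).le, ?_⟩
      rw [exp_f11_eq_sigmoid (hq₀.trans_le hqp) hp₁]
      exact sigmoid_lt_one _
  rintro (_ | k) hk
  · omega
  obtain ⟨hq₀, hqp, hp₁⟩ := invariant k
  rw [hpS, hqS]
  exact exp_f12_lt_exp_f11 hq₀ hqp hp₁
end

section
/- For every p ∈ (0,1), one has exp(f11(p)) > p; and for all p, q ∈ (0,1), one has exp(f21(p,q)) > p. That is, one step of either the SGPO or GRPO first-coordinate update strictly increases the value. -/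
lemma key (p c : ℝ) (hp0 : 0 < p) (hp1 : p < 1) (hc : 0 < c) :
    Real.exp (Real.log p + c - Real.log (1 - p + p * Real.exp c)) > p := by
  have he : 1 < Real.exp c := by
    calc (1:ℝ) = Real.exp 0 := Real.exp_zero.symm
    _ < Real.exp c := Real.exp_lt_exp.mpr hc
  have hD : 0 < 1 - p + p * Real.exp c := by nlinarith [Real.exp_pos c]
  rw [Real.exp_sub, Real.exp_add, Real.exp_log hp0, Real.exp_log hD, gt_iff_lt,
    lt_div_iff₀ hD]
  nlinarith [mul_pos (mul_pos hp0 (by linarith : (0:ℝ) < 1 - p))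
    (by linarith : (0:ℝ) < Real.exp c - 1)]

theorem one_step_increase :
    (∀ p ∈ Set.Ioo (0 : ℝ) 1, Real.exp (f11 p) > p) ∧
    (∀ p ∈ Set.Ioo (0 : ℝ) 1, ∀ q ∈ Set.Ioo (0 : ℝ) 1, Real.exp (f21 p q) > p) := by
  constructor
  · rintro p ⟨hp0, hp1⟩
    exact key p _ hp0 hp1 (mul_pos hp0 (by linarith))
  · rintro p ⟨hp0, hp1⟩ q ⟨hq0, hq1⟩
    exact key p _ hp0 hp1 (mul_pos (mul_pos hp0 (by linarith)) hq0)
end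

section
/- For every p ∈ (0,1) and q ∈ (0,1) with p > q, one has f11(p) > f12(p,q), where f11(p) = log p + p(1-p) - log(1 - p + p·exp(p(1-p))) and f12(p,q) = log q + p²q(1-q) - log(1 - q + q·exp(p²q(1-q))); consequently exp(f11(p)) > exp(f12(p,q)). -/
/-!
Writing `logit x = log x - log (1 - x)`, one has
`log x + t - log (1 - x + x e^t) = log (sigmoid (logit x + t))`, so both `f11 p` and `f12 p q` are
increasing functions of a single real argument: `logit p + p (1 - p)` and `logit q + p² q (1 - q)`.
The second is smaller because `p² < 1` and because `x ↦ logit x + x (1 - x)` is strictly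
increasing on `(0, 1)`.
-/

open Real

theorem log_add_sub_log_one_sub_add_mul_exp {x : ℝ} (hx0 : 0 < x) (hx1 : x < 1) (t : ℝ) :
    log x + t - log (1 - x + x * exp t) = log (sigmoid (log x - log (1 - x) + t)) := by
  have hx1' : 0 < 1 - x := sub_pos.mpr hx1
  have hden : 1 + exp (-(log x - log (1 - x) + t)) = (1 - x + x * exp t) / (x * exp t) := by
    rw [show -(log x - log (1 - x) + t) = log (1 - x) - log x - t by ring, exp_sub, exp_sub,
      exp_log hx0, exp_log hx1']
    field_simp
    ring
  rw [sigmoid_def, log_inv, hden, log_div (by positivity) (by positivity),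
    log_mul hx0.ne' (exp_pos t).ne', log_exp]
  ring

theorem log_sub_log_one_sub_add_mul_one_sub_lt {p q : ℝ} (hq : 0 < q) (hp : p < 1) (hqp : q < p) :
    log q - log (1 - q) + q * (1 - q) < log p - log (1 - p) + p * (1 - p) := by
  have hp0 : 0 < p := hq.trans hqp
  -- `log (p / q) ≥ 1 - q / p > p - q` alone beats the increment `(p - q) (1 - p - q)` of `x (1 - x)`.
  have hlog : (p - q) / p ≤ log p - log q := by
    have h := one_sub_inv_le_log_of_pos (div_pos hp0 hq)
    rwa [inv_div, log_div hp0.ne' hq.ne', one_sub_div hp0.ne'] at h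
  have hlog_one_sub : log (1 - p) < log (1 - q) := log_lt_log (by linarith) (by linarith)
  have hchord : p - q < (p - q) / p := by
    rw [lt_div_iff₀ hp0]
    nlinarith
  nlinarith

theorem f11_gt_f12 (p q : ℝ) (hp : p ∈ Set.Ioo (0 : ℝ) 1) (hq : q ∈ Set.Ioo (0 : ℝ) 1)
    (hpq : p > q) :
    f11 p > f12 p q ∧ Real.exp (f11 p) > Real.exp (f12 p q) := by
  obtain ⟨hp0, hp1⟩ := hp
  obtain ⟨hq0, hq1⟩ := hq
  have hshift : p ^ 2 * q * (1 - q) < q * (1 - q) := by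
    have hp2 : p ^ 2 < 1 := by nlinarith
    calc p ^ 2 * q * (1 - q) = p ^ 2 * (q * (1 - q)) := by ring
      _ < q * (1 - q) := mul_lt_of_lt_one_left (mul_pos hq0 (by linarith)) hp2
  have hlt : f12 p q < f11 p := by
    rw [f11, f12, log_add_sub_log_one_sub_add_mul_exp hp0 hp1,
      log_add_sub_log_one_sub_add_mul_exp hq0 hq1]
    refine log_lt_log (sigmoid_pos _) (sigmoid_lt ?_)
    linarith [log_sub_log_one_sub_add_mul_one_sub_lt hq0 hp1 hpq]
  exact ⟨hlt, exp_lt_exp.mpr hlt⟩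
end

section
/- If a sequence (x_k) satisfies x_0 ∈ (0,1) and x_{k+1} = x_k / ((1 - x_k)·exp(-x_k(1 - x_k)) + x_k) for all k ≥ 0, then (x_k) is strictly increasing, stays in (0,1), and converges to 1 as k → ∞. -/
/-!
Writing `e = exp (-p(1-p))`, the update is `p ↦ p / D(p)` with `D(p) = (1-p) e + p`, a convex
combination of `e` and `1`. For `p ∈ (0,1)` we have `e ∈ (0,1)`, hence `p < D(p) < 1` and the
update lands in `(p, 1)`. The orbit is therefore increasing and bounded by `1`; its limit `L`
lies in `(0,1]`, where `D` does not vanish, so `L` is a fixed point of the update, and the only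
fixed point in `(0,1]` is `1`.
-/

open Real Filter Set Function

namespace SGPO

noncomputable def denom (p : ℝ) : ℝ := (1 - p) * exp (-(p * (1 - p))) + p

noncomputable def step (p : ℝ) : ℝ := p / denom p

lemma denom_pos {p : ℝ} (hp : p ≤ 1) : 0 < denom p := by
  have hexp := add_one_le_exp (-(p * (1 - p)))
  have h1p : 0 ≤ 1 - p := sub_nonneg.mpr hp
  unfold denom
  nlinarith [mul_le_mul_of_nonneg_left hexp h1p, sq_nonneg p, mul_nonneg h1p (sq_nonneg p)]

lemma denom_mem_Ioo {p : ℝ} (hp : p ∈ Ioo (0 : ℝ) 1) : denom p ∈ Ioo p 1 := by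
  obtain ⟨hp0, hp1⟩ := hp
  have he0 : 0 < exp (-(p * (1 - p))) := exp_pos _
  have he1 : exp (-(p * (1 - p))) < 1 := by
    rw [exp_lt_one_iff]
    nlinarith
  unfold denom
  constructor <;> nlinarith

lemma step_mem_Ioo {p : ℝ} (hp : p ∈ Ioo (0 : ℝ) 1) : step p ∈ Ioo p 1 := by
  obtain ⟨hpD, hD1⟩ := denom_mem_Ioo hp
  have hD0 : 0 < denom p := hp.1.trans hpD
  exact ⟨(lt_div_iff₀ hD0).mpr (mul_lt_of_lt_one_right hp.1 hD1), (div_lt_one hD0).mpr hpD⟩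

lemma continuousAt_step {p : ℝ} (hp : p ≤ 1) : ContinuousAt step p := by
  unfold step denom
  exact continuousAt_id.div (by fun_prop) (denom_pos hp).ne'

lemma eq_one_of_isFixedPt_step {p : ℝ} (hp0 : 0 < p) (hp1 : p ≤ 1) (hfix : IsFixedPt step p) :
    p = 1 := by
  by_contra hne
  exact (step_mem_Ioo ⟨hp0, lt_of_le_of_ne hp1 hne⟩).1.ne' hfix

end SGPO

open SGPO

open Filter in
theorem sgpo_first_coordinate_dynamics (x : ℕ → ℝ) (hx0 : x 0 ∈ Set.Ioo (0 : ℝ) 1)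
    (hrec : ∀ k : ℕ, x (k + 1) =
      x k / ((1 - x k) * Real.exp (-(x k * (1 - x k))) + x k)) :
    StrictMono x ∧ (∀ k : ℕ, x k ∈ Set.Ioo (0 : ℝ) 1) ∧ Tendsto x atTop (nhds 1) := by
  have hstep (k : ℕ) : x (k + 1) = step (x k) := hrec k
  have hmem (k : ℕ) : x k ∈ Ioo (0 : ℝ) 1 := by
    induction k with
    | zero => exact hx0
    | succ k ih => exact hstep k ▸ ⟨ih.1.trans (step_mem_Ioo ih).1, (step_mem_Ioo ih).2⟩
  have hmono : StrictMono x :=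
    strictMono_nat_of_lt_succ fun k => hstep k ▸ (step_mem_Ioo (hmem k)).1
  have hbdd : BddAbove (range x) := ⟨1, forall_mem_range.mpr fun k => (hmem k).2.le⟩
  have hlim : Tendsto x atTop (nhds (⨆ k, x k)) := tendsto_atTop_ciSup hmono.monotone hbdd
  have hL0 : 0 < ⨆ k, x k := (hmem 0).1.trans_le (le_ciSup hbdd 0)
  have hL1 : ⨆ k, x k ≤ 1 := ciSup_le fun k => (hmem k).2.le
  have horbit (k : ℕ) : x k = step^[k] (x 0) := by
    induction k with
    | zero => rfl
    | succ k ih => rw [hstep, ih, iterate_succ_apply']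
  have hfix : IsFixedPt step (⨆ k, x k) :=
    isFixedPt_of_tendsto_iterate (hlim.congr horbit) (continuousAt_step hL1)
  exact ⟨hmono, hmem, eq_one_of_isFixedPt_step hL0 hL1 hfix ▸ hlim⟩
end
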